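/- If A is a maximum independent set of a graph G and M is a maximum matching of G, then the union (in the subdivision graph S(G)) of the original vertices corresponding to A and the subdivision vertices corresponding to the edges of M is an open packing of S(G); hence ρ°(S(G)) ≥ α(G) + α'(G). -/

import Mathlib

variable {V : Type*}

/-- A set of vertices is an open packing if the open neighborhoods of distinct
vertices in it are pairwise disjoint. -/
def IsOpenPacking (G : SimpleGraph V) (S : Set V) : Prop :=
  S.Pairwise fun u v => Disjoint (G.neighborSet u) (G.neighborSet v)

/-- The open packing number: the maximum cardinality of an open packing. -/
noncomputable def openPackingNumber (G : SimpleGraph V) : ℕ :=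
  sSup {n | ∃ S : Finset V, IsOpenPacking G ↑S ∧ S.card = n}

/-- `U` is the unique maximum open packing of `G`. -/
def HasUniqueMaxOpenPacking (G : SimpleGraph V) (U : Finset V) : Prop :=
  IsOpenPacking G ↑U ∧ U.card = openPackingNumber G ∧
    ∀ S : Finset V, IsOpenPacking G ↑S → S.card = openPackingNumber G → S = U

/-- A set of vertices is independent if no two of its vertices are adjacent. -/
def IsIndepVSet (G : SimpleGraph V) (S : Set V) : Prop :=
  S.Pairwise fun u v => ¬ G.Adj u v

/-- The independence number of a graph. -/
noncomputable def indepNumber (G : SimpleGraph V) : ℕ :=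
  sSup {n | ∃ S : Finset V, IsIndepVSet G ↑S ∧ S.card = n}

/-- A set of edges is a matching if the edges are pairwise disjoint. -/
def IsMatchingSet (G : SimpleGraph V) (M : Set (Sym2 V)) : Prop :=
  M ⊆ G.edgeSet ∧ M.Pairwise fun e f => ∀ v : V, v ∈ e → v ∉ f

/-- The matching number of a graph. -/
noncomputable def matchingNumber (G : SimpleGraph V) : ℕ :=
  sSup {n | ∃ M : Finset (Sym2 V), IsMatchingSet G ↑M ∧ M.card = n}

/-- The subdivision of `G`: each edge `e = uv` is replaced by a new vertex
`Sum.inr e` adjacent exactly to `u` and `v`. -/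
def subdivisionGraph (G : SimpleGraph V) : SimpleGraph (V ⊕ G.edgeSet) :=
  SimpleGraph.fromRel fun a b => match a, b with
    | Sum.inl u, Sum.inr e => u ∈ (e : Sym2 V)
    | _, _ => False

/-!
In `S(G)` two original vertices have a common neighbour exactly when they are adjacent in `G`,
two subdivision vertices have one exactly when their edges share an endpoint, and an original
vertex never shares a neighbour with a subdivision vertex. Hence independence of `A` and the
matching property of `M` make their union an open packing, of size `|A| + |M|`.
-/

namespace SubdivisionGraph

variable {G : SimpleGraph V}

@[simp]
lemma adj_inl_inr {u : V} {e : G.edgeSet} :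
    (subdivisionGraph G).Adj (.inl u) (.inr e) ↔ u ∈ (e : Sym2 V) := by
  simp [subdivisionGraph]

@[simp]
lemma adj_inr_inl {u : V} {e : G.edgeSet} :
    (subdivisionGraph G).Adj (.inr e) (.inl u) ↔ u ∈ (e : Sym2 V) := by
  simp [subdivisionGraph]

@[simp]
lemma not_adj_inl_inl {u v : V} : ¬ (subdivisionGraph G).Adj (.inl u) (.inl v) := by
  simp [subdivisionGraph]

@[simp]
lemma not_adj_inr_inr {e f : G.edgeSet} : ¬ (subdivisionGraph G).Adj (.inr e) (.inr f) := by
  simp [subdivisionGraph]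

lemma disjoint_neighborSet_inl_inr (u : V) (e : G.edgeSet) :
    Disjoint ((subdivisionGraph G).neighborSet (.inl u))
      ((subdivisionGraph G).neighborSet (.inr e)) := by
  rw [Set.disjoint_left]
  rintro (w | f) <;> simp

lemma disjoint_neighborSet_inl_inl {u v : V} (huv : u ≠ v) (hadj : ¬ G.Adj u v) :
    Disjoint ((subdivisionGraph G).neighborSet (.inl u))
      ((subdivisionGraph G).neighborSet (.inl v)) := by
  rw [Set.disjoint_left]
  rintro (w | e) hu hv
  · simp at hu
  · simp only [SimpleGraph.mem_neighborSet, adj_inl_inr] at hu hv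
    have he : (e : Sym2 V) = s(u, v) := (Sym2.mem_and_mem_iff huv).1 ⟨hu, hv⟩
    exact hadj (G.mem_edgeSet.1 (he ▸ e.2))

lemma disjoint_neighborSet_inr_inr {e f : G.edgeSet} (hef : ∀ w ∈ (e : Sym2 V), w ∉ (f : Sym2 V)) :
    Disjoint ((subdivisionGraph G).neighborSet (.inr e))
      ((subdivisionGraph G).neighborSet (.inr f)) := by
  rw [Set.disjoint_left]
  rintro (w | g) he hf
  · simp only [SimpleGraph.mem_neighborSet, adj_inr_inl] at he hf
    exact hef w he hf
  · simp at he

lemma isOpenPacking_inl_image_union_inr_image {A : Set V} {M : Set (Sym2 V)}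
    (hA : IsIndepVSet G A) (hM : IsMatchingSet G M) :
    IsOpenPacking (subdivisionGraph G)
      ((Sum.inl '' A) ∪ (Sum.inr '' {e : G.edgeSet | (e : Sym2 V) ∈ M})) := by
  rintro x (⟨u, hu, rfl⟩ | ⟨e, he, rfl⟩) y (⟨v, hv, rfl⟩ | ⟨f, hf, rfl⟩) hxy
  · have huv : u ≠ v := fun h => hxy (h ▸ rfl)
    exact disjoint_neighborSet_inl_inl huv (hA hu hv huv)
  · exact disjoint_neighborSet_inl_inr u f
  · exact (disjoint_neighborSet_inl_inr v e).symm
  · exact disjoint_neighborSet_inr_inr (hM.2 he hf fun h => hxy (congrArg _ (Subtype.ext h)))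

end SubdivisionGraph

lemma card_le_openPackingNumber [Finite V] {G : SimpleGraph V} {S : Finset V}
    (hS : IsOpenPacking G ↑S) : S.card ≤ openPackingNumber G := by
  have : Fintype V := Fintype.ofFinite V
  refine le_csSup ⟨Fintype.card V, ?_⟩ ⟨S, hS, rfl⟩
  rintro _ ⟨T, -, rfl⟩
  exact T.card_le_univ

open SubdivisionGraph in
theorem stmt_11_general [Fintype V] (G : SimpleGraph V)
    (A : Finset V) (hA : IsIndepVSet G ↑A) (hAmax : A.card = indepNumber G)
    (M : Finset (Sym2 V)) (hM : IsMatchingSet G ↑M)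
    (hMmax : M.card = matchingNumber G) :
    IsOpenPacking (subdivisionGraph G)
      ((Sum.inl '' ↑A) ∪ (Sum.inr '' {e : G.edgeSet | (e : Sym2 V) ∈ M})) ∧
    indepNumber G + matchingNumber G ≤ openPackingNumber (subdivisionGraph G) := by
  classical
  have hpack := isOpenPacking_inl_image_union_inr_image hA hM
  refine ⟨hpack, ?_⟩
  set S := A.disjSum (M.subtype (· ∈ G.edgeSet))
  have hS : (↑S : Set (V ⊕ G.edgeSet)) =
      (Sum.inl '' ↑A) ∪ (Sum.inr '' {e : G.edgeSet | (e : Sym2 V) ∈ M}) := by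
    ext (v | e) <;> simp [S]
  have hcard : S.card = A.card + M.card := by
    rw [Finset.card_disjSum, Finset.card_subtype, Finset.filter_true_of_mem fun e he => hM.1 he]
  rw [← hAmax, ← hMmax, ← hcard]
  exact card_le_openPackingNumber (hS ▸ hpack)

theorem stmt_11 [Fintype V] [DecidableEq V] (G : SimpleGraph V) [DecidableRel G.Adj]
    (A : Finset V) (hA : IsIndepVSet G ↑A) (hAmax : A.card = indepNumber G)
    (M : Finset (Sym2 V)) (hM : IsMatchingSet G ↑M)
    (hMmax : M.card = matchingNumber G) :
    IsOpenPacking (subdivisionGraph G)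
      ((Sum.inl '' ↑A) ∪ (Sum.inr '' {e : G.edgeSet | (e : Sym2 V) ∈ M})) ∧
    indepNumber G + matchingNumber G ≤ openPackingNumber (subdivisionGraph G) :=
  stmt_11_general G A hA hAmax M hM hMmax
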